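/- For every B > 0, any α > 0 satisfying (1+α)ln(1+α) - α = B satisfies 1 + α ≤ (2B + 2) / ln(1 + √B), provided ln(1+√B) > 0. -/
import Mathlib

/-- If `α > 0` solves `(1+α) log (1+α) - α = B` with `B > 0` and `log (1+√B) > 0`,
then `1 + α ≤ (2B+2)/log (1+√B)`. -/
theorem alpha_upper_bound (B α : ℝ) (hB : 0 < B) (hα : 0 < α)
    (h : (1 + α) * Real.log (1 + α) - α = B)
    (hlog : 0 < Real.log (1 + Real.sqrt B)) :
    1 + α ≤ (2 * B + 2) / Real.log (1 + Real.sqrt B) := by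
  have hx : (0:ℝ) < 1 + α := by linarith
  have h1 : Real.log (1 + α) ≤ α := by
    have := Real.log_le_sub_one_of_pos hx; linarith
  have hB2 : B ≤ α ^ 2 := by nlinarith [h1]
  have hsq : Real.sqrt B ≤ α := by
    rw [show α = Real.sqrt (α ^ 2) by rw [Real.sqrt_sq hα.le]]
    exact Real.sqrt_le_sqrt hB2
  have hL : Real.log (1 + Real.sqrt B) ≤ Real.log (1 + α) :=
    Real.log_le_log (by positivity) (by linarith)
  -- lower bound: log(1+α) ≥ 2 - e/(1+α)
  have key : 2 - Real.exp 1 / (1 + α) ≤ Real.log (1 + α) := by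
    have h2 : Real.log (Real.exp 1 / (1 + α)) ≤ Real.exp 1 / (1 + α) - 1 :=
      Real.log_le_sub_one_of_pos (by positivity)
    rw [Real.log_div (Real.exp_ne_zero 1) (ne_of_gt hx), Real.log_exp] at h2
    linarith
  have he : Real.exp 1 < 4 := by
    have := Real.exp_one_lt_d9; linarith
  have hcancel : (1 + α) * (Real.exp 1 / (1 + α)) = Real.exp 1 := by
    field_simp
  have hαB : α ≤ B + 2 := by nlinarith [mul_le_mul_of_nonneg_left key hx.le]
  rw [le_div_iff₀ hlog]
  calc (1 + α) * Real.log (1 + Real.sqrt B)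
      ≤ (1 + α) * Real.log (1 + α) := by
        exact mul_le_mul_of_nonneg_left hL hx.le
    _ = B + α := by linarith
    _ ≤ 2 * B + 2 := by linarith
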